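/- Let A be an associative algebra and σ an algebra automorphism of A. If D₁ and D₂ are (σ,σ)-derivations of A (i.e. linear maps with D(ab) = D(a)σ(b) + σ(a)D(b)), then the bracket [D₁,D₂]_σ = σ∘D₁∘σ⁻¹∘D₂∘σ⁻¹ − σ∘D₂∘σ⁻¹∘D₁∘σ⁻¹ is again a (σ,σ)-derivation of A. -/

import Mathlib

/-!
Twisting by automorphisms on either side preserves the Leibniz rule, so `Dᵢ ∘ σ⁻¹` are ordinary
derivations (`(id,id)`-derivations). The σ-bracket is `σ ∘ ⁅D₁ ∘ σ⁻¹, D₂ ∘ σ⁻¹⁆`, and the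
commutator of two ordinary derivations is again a derivation.
-/

/-- `D` is a `(σ,σ)`-derivation of the associative algebra `A`. -/
def IsSigmaSigmaDerivation {K A : Type*} [Field K] [Ring A] [Algebra K A]
    (σ : A ≃ₐ[K] A) (D : A →ₗ[K] A) : Prop :=
  ∀ a b : A, D (a * b) = D a * σ b + σ a * D b

/-- The bracket `[D₁,D₂]_σ = σ∘D₁∘σ⁻¹∘D₂∘σ⁻¹ − σ∘D₂∘σ⁻¹∘D₁∘σ⁻¹`. -/
def sigmaBracket {K A : Type*} [Field K] [Ring A] [Algebra K A]
    (σ : A ≃ₐ[K] A) (D₁ D₂ : A →ₗ[K] A) : A →ₗ[K] A :=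
  σ.toLinearMap ∘ₗ D₁ ∘ₗ σ.symm.toLinearMap ∘ₗ D₂ ∘ₗ σ.symm.toLinearMap
    - σ.toLinearMap ∘ₗ D₂ ∘ₗ σ.symm.toLinearMap ∘ₗ D₁ ∘ₗ σ.symm.toLinearMap

namespace IsSigmaSigmaDerivation

variable {K A : Type*} [Field K] [Ring A] [Algebra K A] {σ : A ≃ₐ[K] A} {D : A →ₗ[K] A}

theorem algEquiv_comp (τ : A ≃ₐ[K] A) (h : IsSigmaSigmaDerivation σ D) :
    IsSigmaSigmaDerivation (σ.trans τ) (τ.toLinearMap ∘ₗ D) := fun a b => by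
  simp [h a b]

theorem comp_algEquiv (τ : A ≃ₐ[K] A) (h : IsSigmaSigmaDerivation σ D) :
    IsSigmaSigmaDerivation (τ.trans σ) (D ∘ₗ τ.toLinearMap) := fun a b => by
  simp [h (τ a) (τ b)]

theorem lie {δ₁ δ₂ : Module.End K A} (h₁ : IsSigmaSigmaDerivation AlgEquiv.refl δ₁)
    (h₂ : IsSigmaSigmaDerivation AlgEquiv.refl δ₂) :
    IsSigmaSigmaDerivation AlgEquiv.refl ⁅δ₁, δ₂⁆ := fun a b => by
  simp only [Ring.lie_def, Module.End.mul_apply, LinearMap.sub_apply, h₁ _ _, h₂ _ _, map_add,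
    AlgEquiv.coe_refl, id]
  noncomm_ring

end IsSigmaSigmaDerivation

theorem sigmaBracket_eq_comp_lie {K A : Type*} [Field K] [Ring A] [Algebra K A]
    (σ : A ≃ₐ[K] A) (D₁ D₂ : A →ₗ[K] A) :
    sigmaBracket σ D₁ D₂ =
      σ.toLinearMap ∘ₗ ⁅D₁ ∘ₗ σ.symm.toLinearMap, D₂ ∘ₗ σ.symm.toLinearMap⁆ := by
  ext a
  simp [sigmaBracket, Ring.lie_def]

theorem sigmaBracket_isSigmaSigmaDerivation {K A : Type*} [Field K] [Ring A] [Algebra K A]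
    (σ : A ≃ₐ[K] A) (D₁ D₂ : A →ₗ[K] A)
    (h₁ : IsSigmaSigmaDerivation σ D₁) (h₂ : IsSigmaSigmaDerivation σ D₂) :
    IsSigmaSigmaDerivation σ (sigmaBracket σ D₁ D₂) := by
  have hδ₁ := h₁.comp_algEquiv σ.symm
  have hδ₂ := h₂.comp_algEquiv σ.symm
  rw [AlgEquiv.symm_trans_self] at hδ₁ hδ₂
  rw [sigmaBracket_eq_comp_lie]
  exact (hδ₁.lie hδ₂).algEquiv_comp σ
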